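/- Let Γ_ε(x,t;y,s) be a kernel satisfying |∇_x ∇_y Γ_ε(x,t;y,s)| ≤ C(t−s)^{−(d+2)/2} exp(−κ|x−y|²/(t−s)) for s < t. Let F be bounded on Q_{2r}(x₀,t₀) and Hölder continuous in x with exponent λ ∈ (0,1), and let 0 < ε ≤ r. Then for (x,t) ∈ Q_r(x₀,t₀), ∫_{Q_{2r}(x₀,t₀)} |∇_x∇_y Γ_ε(x,t;y,s)| |F(y,s) − F(x,s)| dy ds ≤ C ln(ε^{−1}r + 2) ‖F‖_{L^∞(Q_{2r})} + C ε^λ ‖F‖_{C^{λ,0}(Q_{2r})}, where ‖F‖_{C^{λ,0}} = sup_{x≠y, t} |F(x,t)−F(y,t)|/|x−y|^λ. -/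

import Mathlib

/-!
Write `u = t - s`. The kernel is dominated by `C₀ u^{-(d+2)/2} exp(-κ|x-y|²/u)`, whose integral in
`y ∈ ℝ^d` is a constant times `u⁻¹`; split the time integral at `u = ε²`. For `u < ε²` the Hölder
bound is absorbed into the Gaussian, `|x-y|^λ exp(-κ|x-y|²/u) ≤ (λu/κ)^{λ/2} exp(-κ|x-y|²/(2u))`,
leaving the integrable singularity `u^{λ/2-1}`, whose integral over `(0, ε²)` is a multiple of
`ε^λ`. For `u ≥ ε²` the sup bound `|F(y,s) - F(x,s)| ≤ 2‖F‖_∞` leaves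
`∫_{ε²}^{4r²} du/u = log(4r²/ε²) ≤ 4 log(r/ε + 2)`.
-/

open MeasureTheory Real Set Module

lemma rpow_le_exp_mul {v m : ℝ} (hv : 0 ≤ v) (hm : 0 ≤ m) : v ^ m ≤ exp (m * v) := by
  calc v ^ m ≤ exp v ^ m := by
        gcongr
        linarith [add_one_le_exp v]
    _ = exp (m * v) := by rw [← exp_mul, mul_comm]

lemma rpow_mul_exp_neg_mul_sq_le {a b z : ℝ} (ha : 0 < a) (hb : 0 < b) (hz : 0 ≤ z) :
    z ^ a * exp (-b * z ^ 2) ≤ (a / b) ^ (a / 2) * exp (-b * z ^ 2 / 2) := by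
  have hsplit : z ^ a = (a / b) ^ (a / 2) * (b * z ^ 2 / a) ^ (a / 2) := by
    have hprod : a / b * (b * z ^ 2 / a) = z ^ (2 : ℝ) := by
      rw [rpow_two]; field_simp
    rw [← mul_rpow (by positivity) (by positivity), hprod, ← rpow_mul hz]
    ring_nf
  calc z ^ a * exp (-b * z ^ 2)
      = (a / b) ^ (a / 2) * ((b * z ^ 2 / a) ^ (a / 2) * exp (-b * z ^ 2)) := by
        rw [hsplit]; ring
    _ ≤ (a / b) ^ (a / 2) * (exp (a / 2 * (b * z ^ 2 / a)) * exp (-b * z ^ 2)) := by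
        gcongr
        exact rpow_le_exp_mul (by positivity) (by positivity)
    _ = (a / b) ^ (a / 2) * exp (-b * z ^ 2 / 2) := by
        rw [← exp_add]; congr 2; field_simp; ring

section TimeIntegrals

variable {t δ a : ℝ}

lemma integrableOn_Ioo_sub_rpow (hδ : 0 ≤ δ) (ha : 0 < a) :
    IntegrableOn (fun s => (t - s) ^ (a - 1)) (Ioo (t - δ) t) := by
  have h := (intervalIntegral.intervalIntegrable_rpow' (r := a - 1) (a := 0) (b := δ)
    (by linarith)).comp_sub_left t
  rw [sub_zero] at h
  exact ((intervalIntegrable_iff_integrableOn_Ioc_of_le (by linarith)).1 h.symm).mono_set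
    Ioo_subset_Ioc_self

lemma integral_Ioo_sub_rpow (hδ : 0 ≤ δ) (ha : 0 < a) :
    ∫ s in Ioo (t - δ) t, (t - s) ^ (a - 1) = δ ^ a / a := by
  rw [← integral_Ioc_eq_integral_Ioo, ← intervalIntegral.integral_of_le (by linarith),
    intervalIntegral.integral_comp_sub_left (fun u => u ^ (a - 1)), sub_self, sub_sub_cancel,
    integral_rpow (Or.inl (by linarith)), sub_add_cancel, zero_rpow ha.ne', sub_zero]

lemma integrableOn_Ioc_sub_inv {b : ℝ} (hbt : b < t) :
    IntegrableOn (fun s => (t - s)⁻¹) (Ioc a b) := by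
  refine (ContinuousOn.integrableOn_Icc ?_).mono_set Ioc_subset_Icc_self
  exact (continuousOn_const.sub continuousOn_id).inv₀ fun s hs =>
    sub_ne_zero.2 (hs.2.trans_lt hbt).ne'

lemma integral_Ioc_sub_inv {b : ℝ} (hab : a ≤ b) (hbt : b < t) :
    ∫ s in Ioc a b, (t - s)⁻¹ = log ((t - a) / (t - b)) := by
  rw [← intervalIntegral.integral_of_le hab,
    intervalIntegral.integral_comp_sub_left (fun u => u⁻¹) t,
    integral_inv (notMem_uIcc_of_lt (by linarith) (by linarith))]

end TimeIntegrals

lemma log_div_sq_le {T ε r : ℝ} (hε : 0 < ε) (hr : 0 ≤ r) (hT : 0 < T) (hTr : T ≤ (2 * r) ^ 2) :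
    log (T / ε ^ 2) ≤ 4 * log (ε⁻¹ * r + 2) := by
  have hρ : 0 ≤ ε⁻¹ * r := by positivity
  rw [show 4 * log (ε⁻¹ * r + 2) = log ((ε⁻¹ * r + 2) ^ 4) by rw [log_pow]; norm_num]
  refine log_le_log (by positivity) ?_
  rw [div_le_iff₀ (by positivity)]
  calc T ≤ (2 * r) ^ 2 := hTr
    _ = 4 * (ε⁻¹ * r) ^ 2 * ε ^ 2 := by field_simp; ring
    _ ≤ (ε⁻¹ * r + 2) ^ 4 * ε ^ 2 := by
        gcongr
        nlinarith [sq_nonneg (ε⁻¹ * r), sq_nonneg (ε⁻¹ * r + 2)]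

lemma restrict_univ_prod_eq_prod {α β : Type*} [MeasureSpace α] [MeasureSpace β]
    [SFinite (volume : Measure α)] [SFinite (volume : Measure β)] (I : Set β) :
    (volume : Measure (α × β)).restrict (univ ×ˢ I) = volume.prod (volume.restrict I) := by
  rw [Measure.volume_eq_prod, ← Measure.prod_restrict, Measure.restrict_univ]

lemma setIntegral_le_add_of_le_indicator {α : Type*} [MeasurableSpace α] {μ : Measure α}
    {f g₁ g₂ : α → ℝ} {Q S₁ S₂ : Set α} (hQ : MeasurableSet Q) (hS₁ : MeasurableSet S₁)
    (hS₂ : MeasurableSet S₂) (hf : ∀ q ∈ Q, 0 ≤ f q)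
    (hg₁ : IntegrableOn g₁ S₁ μ) (hg₂ : IntegrableOn g₂ S₂ μ)
    (hg₁0 : ∀ q ∈ S₁, 0 ≤ g₁ q) (hg₂0 : ∀ q ∈ S₂, 0 ≤ g₂ q)
    (hle : ∀ q ∈ Q, f q ≤ S₁.indicator g₁ q + S₂.indicator g₂ q) :
    ∫ q in Q, f q ∂μ ≤ ∫ q in S₁, g₁ q ∂μ + ∫ q in S₂, g₂ q ∂μ := by
  have hg := ((integrable_indicator_iff hS₁).2 hg₁).add ((integrable_indicator_iff hS₂).2 hg₂)
  calc ∫ q in Q, f q ∂μ ≤ ∫ q in Q, (S₁.indicator g₁ + S₂.indicator g₂) q ∂μ :=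
        integral_mono_of_nonneg (ae_restrict_of_forall_mem hQ hf) hg.integrableOn
          (ae_restrict_of_forall_mem hQ hle)
    _ ≤ ∫ q, (S₁.indicator g₁ + S₂.indicator g₂) q ∂μ :=
        setIntegral_le_integral hg <| .of_forall fun q =>
          add_nonneg (indicator_nonneg hg₁0 q) (indicator_nonneg hg₂0 q)
    _ = ∫ q in S₁, g₁ q ∂μ + ∫ q in S₂, g₂ q ∂μ := by
        rw [integral_add' ((integrable_indicator_iff hS₁).2 hg₁)
          ((integrable_indicator_iff hS₂).2 hg₂),
          integral_indicator hS₁, integral_indicator hS₂]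

section HeatWeight

variable {V : Type*} [NormedAddCommGroup V]

noncomputable def heatWeight (p c : ℝ) (x : V) (t : ℝ) (q : V × ℝ) : ℝ :=
  (t - q.2) ^ p * exp (-c * ‖x - q.1‖ ^ 2 / (t - q.2))

variable {p c t : ℝ} {x : V}

lemma heatWeight_nonneg {q : V × ℝ} (hq : q.2 ≤ t) : 0 ≤ heatWeight p c x t q :=
  mul_nonneg (rpow_nonneg (sub_nonneg.2 hq) p) (exp_pos _).le

lemma heatWeight_apply_mk (y : V) (s : ℝ) :
    heatWeight p c x t (y, s) = (t - s) ^ p * exp (-(c / (t - s)) * ‖x - y‖ ^ 2) := by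
  rw [heatWeight]; congr 2; ring

lemma rpow_mul_heatWeight_le {a : ℝ} (ha : 0 < a) (hc : 0 < c) {y : V} {s : ℝ} (hs : s < t) :
    ‖x - y‖ ^ a * heatWeight p c x t (y, s) ≤
      (a / c) ^ (a / 2) * heatWeight (p + a / 2) (c / 2) x t (y, s) := by
  have hu : 0 < t - s := sub_pos.2 hs
  have hgauss := rpow_mul_exp_neg_mul_sq_le ha (div_pos hc hu) (norm_nonneg (x - y))
  rw [heatWeight_apply_mk, heatWeight_apply_mk, rpow_add hu]
  calc ‖x - y‖ ^ a * ((t - s) ^ p * exp (-(c / (t - s)) * ‖x - y‖ ^ 2))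
      = (t - s) ^ p * (‖x - y‖ ^ a * exp (-(c / (t - s)) * ‖x - y‖ ^ 2)) := by ring
    _ ≤ (t - s) ^ p * ((a / (c / (t - s))) ^ (a / 2) * exp (-(c / (t - s)) * ‖x - y‖ ^ 2 / 2)) := by
        gcongr
    _ = _ := by
        rw [div_div_eq_mul_div, mul_div_right_comm, mul_rpow (by positivity) hu.le]
        ring_nf

lemma abs_mul_abs_le_heatWeight {g φ C₀ K a κ p t s : ℝ} {x y : V} (ha : 0 < a) (hC₀ : 0 ≤ C₀)
    (hK : 0 ≤ K) (hκ : 0 < κ) (hs : s < t) (hg : |g| ≤ C₀ * heatWeight p κ x t (y, s))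
    (hφ : |φ| ≤ K * ‖x - y‖ ^ a) :
    |g| * |φ| ≤ C₀ * K * (a / κ) ^ (a / 2) * heatWeight (p + a / 2) (κ / 2) x t (y, s) := by
  calc |g| * |φ| ≤ C₀ * heatWeight p κ x t (y, s) * (K * ‖x - y‖ ^ a) :=
        mul_le_mul hg hφ (abs_nonneg _) ((abs_nonneg _).trans hg)
    _ = C₀ * K * (‖x - y‖ ^ a * heatWeight p κ x t (y, s)) := by ring
    _ ≤ C₀ * K * ((a / κ) ^ (a / 2) * heatWeight (p + a / 2) (κ / 2) x t (y, s)) :=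
        mul_le_mul_of_nonneg_left (rpow_mul_heatWeight_le ha hκ hs) (mul_nonneg hC₀ hK)
    _ = _ := by ring

variable [MeasurableSpace V] [BorelSpace V]

lemma measurable_heatWeight : Measurable (heatWeight p c x t) := by
  unfold heatWeight; fun_prop

variable [InnerProductSpace ℝ V] [FiniteDimensional ℝ V]

lemma integral_exp_neg_mul_norm_sub_sq {b : ℝ} (hb : 0 < b) (x : V) :
    ∫ y, exp (-b * ‖x - y‖ ^ 2) = (π / b) ^ (finrank ℝ V / 2 : ℝ) := by
  rw [integral_sub_left_eq_self (fun v => exp (-b * ‖v‖ ^ 2)) volume x]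
  exact GaussianFourier.integral_rexp_neg_mul_sq_norm hb

lemma integrable_exp_neg_mul_norm_sub_sq {b : ℝ} (hb : 0 < b) (x : V) :
    Integrable fun y => exp (-b * ‖x - y‖ ^ 2) :=
  Integrable.of_integral_ne_zero <| by
    rw [integral_exp_neg_mul_norm_sub_sq hb]; positivity

lemma integral_heatWeight_slice (hc : 0 < c) {s : ℝ} (hs : s < t) :
    ∫ y, heatWeight p c x t (y, s) =
      (π / c) ^ (finrank ℝ V / 2 : ℝ) * (t - s) ^ (p + finrank ℝ V / 2) := by
  have hu : 0 < t - s := sub_pos.2 hs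
  simp_rw [heatWeight_apply_mk]
  rw [integral_const_mul, integral_exp_neg_mul_norm_sub_sq (div_pos hc hu), div_div_eq_mul_div,
    mul_div_right_comm, mul_rpow (by positivity) hu.le, rpow_add hu]
  ring

lemma integrable_heatWeight_slice (hc : 0 < c) {s : ℝ} (hs : s < t) :
    Integrable fun y => heatWeight p c x t (y, s) := by
  simp_rw [heatWeight_apply_mk]
  exact (integrable_exp_neg_mul_norm_sub_sq (div_pos hc (sub_pos.2 hs)) x).const_mul _

variable {I : Set ℝ}

lemma integrableOn_univ_prod_heatWeight (hc : 0 < c) (hI : MeasurableSet I) (hIt : I ⊆ Iio t)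
    (hint : IntegrableOn (fun s => (t - s) ^ (p + finrank ℝ V / 2)) I) :
    IntegrableOn (heatWeight p c x t) (univ ×ˢ I) := by
  rw [IntegrableOn, restrict_univ_prod_eq_prod,
    integrable_prod_iff' measurable_heatWeight.aestronglyMeasurable]
  refine ⟨(ae_restrict_iff' hI).2 (.of_forall fun s hs => integrable_heatWeight_slice hc (hIt hs)),
    (hint.const_mul ((π / c) ^ (finrank ℝ V / 2 : ℝ))).congr ?_⟩
  filter_upwards [ae_restrict_mem hI] with s hs
  rw [← integral_heatWeight_slice hc (hIt hs)]
  refine integral_congr_ae (.of_forall fun y => ?_)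
  exact (Real.norm_of_nonneg (heatWeight_nonneg (hIt hs).le)).symm

lemma setIntegral_univ_prod_heatWeight (hc : 0 < c) (hI : MeasurableSet I) (hIt : I ⊆ Iio t)
    (hint : IntegrableOn (fun s => (t - s) ^ (p + finrank ℝ V / 2)) I) :
    ∫ q in univ ×ˢ I, heatWeight p c x t q =
      (π / c) ^ (finrank ℝ V / 2 : ℝ) * ∫ s in I, (t - s) ^ (p + finrank ℝ V / 2) := by
  have h := integrableOn_univ_prod_heatWeight (x := x) hc hI hIt hint
  rw [IntegrableOn, restrict_univ_prod_eq_prod] at h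
  rw [restrict_univ_prod_eq_prod, integral_prod_symm _ h, ← integral_const_mul]
  exact setIntegral_congr_fun hI fun s hs => integral_heatWeight_slice hc (hIt hs)

variable {a b δ : ℝ}

lemma integrableOn_heatWeight_Ioo (hc : 0 < c) (ha : 0 < a) (hδ : 0 ≤ δ)
    (hp : p + finrank ℝ V / 2 = a - 1) :
    IntegrableOn (heatWeight p c x t) (univ ×ˢ Ioo (t - δ) t) :=
  integrableOn_univ_prod_heatWeight hc measurableSet_Ioo (fun _ hs => hs.2)
    (hp ▸ integrableOn_Ioo_sub_rpow hδ ha)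

lemma setIntegral_heatWeight_Ioo (hc : 0 < c) (ha : 0 < a) (hδ : 0 ≤ δ)
    (hp : p + finrank ℝ V / 2 = a - 1) :
    ∫ q in univ ×ˢ Ioo (t - δ) t, heatWeight p c x t q =
      (π / c) ^ (finrank ℝ V / 2 : ℝ) * (δ ^ a / a) := by
  rw [setIntegral_univ_prod_heatWeight hc measurableSet_Ioo (fun _ hs => hs.2)
    (hp ▸ integrableOn_Ioo_sub_rpow hδ ha), hp, integral_Ioo_sub_rpow hδ ha]

lemma integrableOn_heatWeight_Ioc (hc : 0 < c) (hbt : b < t) (hp : p + finrank ℝ V / 2 = -1) :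
    IntegrableOn (heatWeight p c x t) (univ ×ˢ Ioc a b) :=
  integrableOn_univ_prod_heatWeight hc measurableSet_Ioc (fun _ hs => hs.2.trans_lt hbt)
    (by simpa only [hp, rpow_neg_one] using integrableOn_Ioc_sub_inv hbt)

lemma setIntegral_heatWeight_Ioc (hc : 0 < c) (hab : a ≤ b) (hbt : b < t)
    (hp : p + finrank ℝ V / 2 = -1) :
    ∫ q in univ ×ˢ Ioc a b, heatWeight p c x t q =
      (π / c) ^ (finrank ℝ V / 2 : ℝ) * log ((t - a) / (t - b)) := by
  rw [setIntegral_univ_prod_heatWeight hc measurableSet_Ioc (fun _ hs => hs.2.trans_lt hbt)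
    (by simpa only [hp, rpow_neg_one] using integrableOn_Ioc_sub_inv hbt), hp]
  simp only [rpow_neg_one]
  rw [integral_Ioc_sub_inv hab hbt]

end HeatWeight

section Estimate

variable {V : Type*} [NormedAddCommGroup V] [InnerProductSpace ℝ V] [FiniteDimensional ℝ V]
  [MeasurableSpace V] [BorelSpace V]

lemma setIntegral_abs_mul_abs_sub_le {p lam C₀ κ Kinf Khol δ τ t₁ t : ℝ}
    (hp : p + finrank ℝ V / 2 = -1) (hlam : 0 < lam) (hC₀ : 0 ≤ C₀) (hκ : 0 < κ)
    (hKinf : 0 ≤ Kinf) (hKhol : 0 ≤ Khol) (hδ : 0 < δ) (hτ : τ + δ ≤ t)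
    {B : Set V} (hB : MeasurableSet B) {G F : V → ℝ → ℝ} {x : V}
    (hG : ∀ y s, s < t → |G y s| ≤ C₀ * heatWeight p κ x t (y, s))
    (hG0 : ∀ y s, t ≤ s → G y s = 0)
    (hFb : ∀ q ∈ B ×ˢ Ioo τ t₁, |F q.1 q.2 - F x q.2| ≤ 2 * Kinf)
    (hFh : ∀ q ∈ B ×ˢ Ioo τ t₁, |F q.1 q.2 - F x q.2| ≤ Khol * ‖x - q.1‖ ^ lam) :
    ∫ q in B ×ˢ Ioo τ t₁, |G q.1 q.2| * |F q.1 q.2 - F x q.2| ≤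
      C₀ * Khol * (lam / κ) ^ (lam / 2) *
          ((π / (κ / 2)) ^ (finrank ℝ V / 2 : ℝ) * (δ ^ (lam / 2) / (lam / 2))) +
        C₀ * (2 * Kinf) * ((π / κ) ^ (finrank ℝ V / 2 : ℝ) * log ((t - τ) / δ)) := by
  have hp_near : p + lam / 2 + finrank ℝ V / 2 = lam / 2 - 1 := by linarith
  have hδt : t - δ < t := sub_lt_self t hδ
  set S₁ := univ ×ˢ Ioo (t - δ) t
  set S₂ := univ ×ˢ Ioc τ (t - δ)
  have hnear_nonneg : ∀ q ∈ S₁,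
      0 ≤ C₀ * Khol * (lam / κ) ^ (lam / 2) * heatWeight (p + lam / 2) (κ / 2) x t q :=
    fun q hq => mul_nonneg (by positivity) (heatWeight_nonneg hq.2.2.le)
  have hfar_nonneg : ∀ q ∈ S₂, 0 ≤ C₀ * (2 * Kinf) * heatWeight p κ x t q :=
    fun q hq => mul_nonneg (by positivity) (heatWeight_nonneg (hq.2.2.trans hδt.le))
  have hfar := setIntegral_heatWeight_Ioc (x := x) (a := τ) hκ (by linarith) hδt hp
  rw [sub_sub_cancel] at hfar
  rw [← setIntegral_heatWeight_Ioo (x := x) (half_pos hκ) (half_pos hlam) hδ.le hp_near, ← hfar,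
    ← integral_const_mul, ← integral_const_mul]
  refine setIntegral_le_add_of_le_indicator (hB.prod measurableSet_Ioo)
    (MeasurableSet.univ.prod measurableSet_Ioo) (MeasurableSet.univ.prod measurableSet_Ioc)
    (fun q _ => by positivity)
    ((integrableOn_heatWeight_Ioo (half_pos hκ) (half_pos hlam) hδ.le hp_near).const_mul _)
    ((integrableOn_heatWeight_Ioc hκ hδt hp).const_mul _) hnear_nonneg hfar_nonneg ?_
  rintro ⟨y, s⟩ hq
  rcases lt_or_ge s t with hst | hts
  · rcases lt_or_ge (t - δ) s with hnear | hfar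
    · have hS₁ : (y, s) ∈ S₁ := ⟨mem_univ y, hnear, hst⟩
      have hS₂ : (y, s) ∉ S₂ := fun h => h.2.2.not_gt hnear
      rw [indicator_of_mem hS₁, indicator_of_notMem hS₂, add_zero]
      exact abs_mul_abs_le_heatWeight hlam hC₀ hKhol hκ hst (hG y s hst) (hFh _ hq)
    · have hS₁ : (y, s) ∉ S₁ := fun h => h.2.1.not_ge hfar
      have hS₂ : (y, s) ∈ S₂ := ⟨mem_univ y, hq.2.1, hfar⟩
      rw [indicator_of_notMem hS₁, indicator_of_mem hS₂, zero_add]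
      calc |G y s| * |F y s - F x s| ≤ C₀ * heatWeight p κ x t (y, s) * (2 * Kinf) :=
            mul_le_mul (hG y s hst) (hFb _ hq) (abs_nonneg _) ((abs_nonneg _).trans (hG y s hst))
        _ = _ := by ring
  · rw [hG0 y s hts, abs_zero, zero_mul]
    exact add_nonneg (indicator_nonneg hnear_nonneg _) (indicator_nonneg hfar_nonneg _)

end Estimate

theorem log_estimate_mixed_kernel_general (d : ℕ) (lam C₀ κ : ℝ)
    (hlam0 : 0 < lam) (hC₀ : 0 < C₀) (hκ : 0 < κ) :
    ∃ C : ℝ, 0 < C ∧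
      ∀ (G : EuclideanSpace ℝ (Fin d) → ℝ → EuclideanSpace ℝ (Fin d) → ℝ → ℝ)
        (F : EuclideanSpace ℝ (Fin d) → ℝ → ℝ)
        (Kinf Khol ε r : ℝ) (x₀ : EuclideanSpace ℝ (Fin d)) (t₀ : ℝ)
        (x : EuclideanSpace ℝ (Fin d)) (t : ℝ),
        (∀ x' t' y s, s < t' →
          |G x' t' y s| ≤ C₀ * (t' - s) ^ (-((d:ℝ) + 2) / 2) *
            Real.exp (-κ * ‖x' - y‖^2 / (t' - s))) →
        (∀ x' t' y s, t' ≤ s → G x' t' y s = 0) →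
        0 ≤ Kinf → 0 ≤ Khol →
        (∀ y s, (y, s) ∈ Metric.ball x₀ (2*r) ×ˢ Set.Ioo (t₀ - (2*r)^2) t₀ →
          |F y s| ≤ Kinf) →
        (∀ y y' s, (y, s) ∈ Metric.ball x₀ (2*r) ×ˢ Set.Ioo (t₀ - (2*r)^2) t₀ →
          (y', s) ∈ Metric.ball x₀ (2*r) ×ˢ Set.Ioo (t₀ - (2*r)^2) t₀ →
          |F y s - F y' s| ≤ Khol * ‖y - y'‖ ^ lam) →
        0 < ε → ε ≤ r →
        (x, t) ∈ Metric.ball x₀ r ×ˢ Set.Ioo (t₀ - r^2) t₀ →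
        (∫ q in Metric.ball x₀ (2*r) ×ˢ Set.Ioo (t₀ - (2*r)^2) t₀,
            |G x t q.1 q.2| * |F q.1 q.2 - F x q.2|) ≤
          C * Real.log (ε⁻¹ * r + 2) * Kinf + C * ε ^ lam * Khol := by
  set A₁ := C₀ * (lam / κ) ^ (lam / 2) * ((π / (κ / 2)) ^ ((d : ℝ) / 2) / (lam / 2)) with hA₁
  set A₂ := 8 * C₀ * (π / κ) ^ ((d : ℝ) / 2) with hA₂
  refine ⟨A₁ + A₂, by positivity, ?_⟩
  intro G F Kinf Khol ε r x₀ t₀ x t hG hG0 hKinf hKhol hFb hFh hε hεr hxt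
  have ht₁ : t₀ - r ^ 2 < t := hxt.2.1
  have ht₂ : t < t₀ := hxt.2.2
  have hr : 0 ≤ r := hε.le.trans hεr
  have hxB : x ∈ Metric.ball x₀ (2 * r) := Metric.ball_subset_ball (by linarith) hxt.1
  have hεr2 : ε ^ 2 ≤ r ^ 2 := pow_le_pow_left₀ hε.le hεr 2
  have h := setIntegral_abs_mul_abs_sub_le (τ := t₀ - (2 * r) ^ 2) (t₁ := t₀) (F := F)
    (by rw [finrank_euclideanSpace_fin]; ring) hlam0 hC₀.le hκ hKinf hKhol (pow_pos hε 2)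
    (by linarith) Metric.isOpen_ball.measurableSet
    (fun y s hs => (hG x t y s hs).trans_eq (mul_assoc _ _ _)) (hG0 x t)
    (fun q hq => (abs_sub _ _).trans (by linarith [hFb _ _ hq, hFb x q.2 ⟨hxB, hq.2⟩]))
    (fun q hq => norm_sub_rev x q.1 ▸ hFh _ _ _ hq ⟨hxB, hq.2⟩)
  have hlog := log_div_sq_le (T := t - (t₀ - (2 * r) ^ 2)) hε hr (by linarith) (by linarith)
  have hρ : 0 ≤ ε⁻¹ * r := by positivity
  have hlog_nonneg : 0 ≤ log (ε⁻¹ * r + 2) := log_nonneg (by linarith)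
  have hεlam : (ε ^ 2) ^ (lam / 2) = ε ^ lam := by
    rw [← rpow_natCast, ← rpow_mul hε.le]; congr 1; push_cast; ring
  rw [finrank_euclideanSpace_fin, hεlam] at h
  calc _ ≤ _ := h
    _ = A₁ * ε ^ lam * Khol +
          2 * C₀ * Kinf * (π / κ) ^ ((d : ℝ) / 2) * log ((t - (t₀ - (2 * r) ^ 2)) / ε ^ 2) := by
        rw [hA₁]; ring
    _ ≤ A₁ * ε ^ lam * Khol +
          2 * C₀ * Kinf * (π / κ) ^ ((d : ℝ) / 2) * (4 * log (ε⁻¹ * r + 2)) := by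
        gcongr
    _ = A₂ * log (ε⁻¹ * r + 2) * Kinf + A₁ * ε ^ lam * Khol := by
        rw [hA₂]; ring
    _ ≤ (A₁ + A₂) * log (ε⁻¹ * r + 2) * Kinf + (A₁ + A₂) * ε ^ lam * Khol := by
        gcongr <;> linarith [show 0 ≤ A₁ by positivity, show 0 ≤ A₂ by positivity]

/-- Logarithmic estimate for the singular integral of a mixed-derivative Gaussian kernel
against the oscillation of a bounded Hölder function:
∫_{Q_{2r}} |∇ₓ∇_y Γ_ε| |F(y,s) − F(x,s)| ≤ C ln(ε^{−1}r + 2)‖F‖_∞ + Cε^λ ‖F‖_{C^{λ,0}}. -/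
theorem log_estimate_mixed_kernel (d : ℕ) (lam C₀ κ : ℝ)
    (hlam0 : 0 < lam) (hlam1 : lam < 1) (hC₀ : 0 < C₀) (hκ : 0 < κ) :
    ∃ C : ℝ, 0 < C ∧
      ∀ (G : EuclideanSpace ℝ (Fin d) → ℝ → EuclideanSpace ℝ (Fin d) → ℝ → ℝ)
        (F : EuclideanSpace ℝ (Fin d) → ℝ → ℝ)
        (Kinf Khol ε r : ℝ) (x₀ : EuclideanSpace ℝ (Fin d)) (t₀ : ℝ)
        (x : EuclideanSpace ℝ (Fin d)) (t : ℝ),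
        (∀ x' t' y s, s < t' →
          |G x' t' y s| ≤ C₀ * (t' - s) ^ (-((d:ℝ) + 2) / 2) *
            Real.exp (-κ * ‖x' - y‖^2 / (t' - s))) →
        (∀ x' t' y s, t' ≤ s → G x' t' y s = 0) →
        0 ≤ Kinf → 0 ≤ Khol →
        (∀ y s, (y, s) ∈ Metric.ball x₀ (2*r) ×ˢ Set.Ioo (t₀ - (2*r)^2) t₀ →
          |F y s| ≤ Kinf) →
        (∀ y y' s, (y, s) ∈ Metric.ball x₀ (2*r) ×ˢ Set.Ioo (t₀ - (2*r)^2) t₀ →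
          (y', s) ∈ Metric.ball x₀ (2*r) ×ˢ Set.Ioo (t₀ - (2*r)^2) t₀ →
          |F y s - F y' s| ≤ Khol * ‖y - y'‖ ^ lam) →
        0 < ε → ε ≤ r →
        (x, t) ∈ Metric.ball x₀ r ×ˢ Set.Ioo (t₀ - r^2) t₀ →
        (∫ q in Metric.ball x₀ (2*r) ×ˢ Set.Ioo (t₀ - (2*r)^2) t₀,
            |G x t q.1 q.2| * |F q.1 q.2 - F x q.2|) ≤
          C * Real.log (ε⁻¹ * r + 2) * Kinf + C * ε ^ lam * Khol :=
  log_estimate_mixed_kernel_general d lam C₀ κ hlam0 hC₀ hκ
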